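/- arXiv:2212.14543 — 5 statements merged into one kernel-verified Lean document; each statement's English description precedes it below -/
import Mathlib

section
/- Let m be a positive integer and let T, A, B, D be real m×m matrices with A invertible. Define Λ = A T Bᵀ + B Tᵀ Aᵀ and the real (2m)×(2m) block matrix J = [[-T Bᵀ A⁻ᵀ, T], [-Tᵀ, -D]] (where A⁻ᵀ denotes the inverse transpose). Then J + Jᵀ equals the block-diagonal matrix -diag(A⁻¹ Λ A⁻ᵀ, D + Dᵀ). Consequently, if Λ is positive definite and D + Dᵀ is positive definite, then J + Jᵀ is negative definite. -/
open Matrix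

lemma posDef_conj_aux {n : ℕ} {Λ C : Matrix (Fin n) (Fin n) ℝ} (hΛ : Λ.PosDef)
    (hC : IsUnit C.det) : (C * Λ * Cᵀ).PosDef := by
  refine PosDef.of_dotProduct_mulVec_pos (hΛ.posSemidef.mul_mul_conjTranspose_same C).1 fun x hx => ?_
  have hCt : IsUnit (Cᵀ).det := by rwa [Matrix.det_transpose]
  have hy : Cᵀ *ᵥ x ≠ 0 := by
    intro h
    have h2 := congrArg (fun v => (Cᵀ)⁻¹ *ᵥ v) h
    simp only [mulVec_mulVec, Matrix.nonsing_inv_mul _ hCt, one_mulVec, mulVec_zero] at h2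
    exact hx h2
  have hpos := hΛ.dotProduct_mulVec_pos hy
  have key : star x ⬝ᵥ ((C * Λ * Cᵀ) *ᵥ x)
      = star (Cᵀ *ᵥ x) ⬝ᵥ (Λ *ᵥ (Cᵀ *ᵥ x)) := by
    rw [← mulVec_mulVec, ← mulVec_mulVec, dotProduct_mulVec]
    congr 1
    simp [← mulVec_transpose]
  rw [key]
  exact hpos

lemma posDef_fromBlocks_diag {k l : ℕ} {P : Matrix (Fin k) (Fin k) ℝ}
    {Q : Matrix (Fin l) (Fin l) ℝ} (hP : P.PosDef) (hQ : Q.PosDef) :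
    (Matrix.fromBlocks P 0 0 Q).PosDef := by
  refine PosDef.of_dotProduct_mulVec_pos ?_ fun x hx => ?_
  · have h1 := hP.1
    have h2 := hQ.1
    unfold Matrix.IsHermitian at *
    rw [Matrix.fromBlocks_conjTranspose, h1, h2]
    simp
  · have hsplit : star x ⬝ᵥ (Matrix.fromBlocks P 0 0 Q *ᵥ x)
        = star (x ∘ Sum.inl) ⬝ᵥ (P *ᵥ (x ∘ Sum.inl))
          + star (x ∘ Sum.inr) ⬝ᵥ (Q *ᵥ (x ∘ Sum.inr)) := by
      simp [Matrix.fromBlocks_mulVec, dotProduct, Fintype.sum_sum_type]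
    rw [hsplit]
    rcases (by
      by_contra h
      push_neg at h
      apply hx
      funext i
      cases i with
      | inl i => exact congrFun h.1 i
      | inr i => exact congrFun h.2 i : x ∘ Sum.inl ≠ 0 ∨ x ∘ Sum.inr ≠ 0) with h | h
    · exact add_pos_of_pos_of_nonneg (hP.dotProduct_mulVec_pos h) (hQ.posSemidef.dotProduct_mulVec_nonneg _)
    · exact add_pos_of_nonneg_of_pos (hP.posSemidef.dotProduct_mulVec_nonneg _) (hQ.dotProduct_mulVec_pos h)

/-- For real m×m matrices T, A, B, D with A invertible, setting
Λ = A T Bᵀ + B Tᵀ Aᵀ and J = [[-T Bᵀ A⁻ᵀ, T], [-Tᵀ, -D]], one has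
J + Jᵀ = -diag(A⁻¹ Λ A⁻ᵀ, D + Dᵀ); consequently if Λ and D + Dᵀ are positive
definite then J + Jᵀ is negative definite. -/
theorem stmt_0 (m : ℕ) (hm : 0 < m)
    (T A B D : Matrix (Fin m) (Fin m) ℝ) (hA : IsUnit A.det) :
    let Λ : Matrix (Fin m) (Fin m) ℝ := A * T * Bᵀ + B * Tᵀ * Aᵀ
    let J : Matrix (Fin m ⊕ Fin m) (Fin m ⊕ Fin m) ℝ :=
      Matrix.fromBlocks (-(T * Bᵀ * (A⁻¹)ᵀ)) T (-Tᵀ) (-D)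
    J + Jᵀ = -(Matrix.fromBlocks (A⁻¹ * Λ * (A⁻¹)ᵀ) 0 0 (D + Dᵀ)) ∧
      (Λ.PosDef → (D + Dᵀ).PosDef → (-(J + Jᵀ)).PosDef) := by
  intro Λ J
  have hA1 : A⁻¹ * A = 1 := Matrix.nonsing_inv_mul A hA
  have hA2 : Aᵀ * (A⁻¹)ᵀ = 1 := by
    rw [← Matrix.transpose_mul, hA1, Matrix.transpose_one]
  have heq : J + Jᵀ = -(Matrix.fromBlocks (A⁻¹ * Λ * (A⁻¹)ᵀ) 0 0 (D + Dᵀ)) := by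
    show Matrix.fromBlocks (-(T * Bᵀ * (A⁻¹)ᵀ)) T (-Tᵀ) (-D)
        + (Matrix.fromBlocks (-(T * Bᵀ * (A⁻¹)ᵀ)) T (-Tᵀ) (-D))ᵀ = _
    rw [Matrix.fromBlocks_transpose, Matrix.fromBlocks_add, Matrix.fromBlocks_neg]
    · have : A⁻¹ * Λ * (A⁻¹)ᵀ = T * Bᵀ * (A⁻¹)ᵀ + A⁻¹ * B * Tᵀ := by
        show A⁻¹ * (A * T * Bᵀ + B * Tᵀ * Aᵀ) * (A⁻¹)ᵀ = _
        rw [Matrix.mul_add, Matrix.add_mul]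
        congr 1
        · rw [show A⁻¹ * (A * T * Bᵀ) = (A⁻¹ * A) * (T * Bᵀ) by
            simp [Matrix.mul_assoc], hA1, Matrix.one_mul]
        · rw [show A⁻¹ * (B * Tᵀ * Aᵀ) * (A⁻¹)ᵀ = A⁻¹ * B * Tᵀ * (Aᵀ * (A⁻¹)ᵀ) by
            simp [Matrix.mul_assoc], hA2, Matrix.mul_one]
      rw [this]
      rw [Matrix.transpose_neg, Matrix.transpose_mul, Matrix.transpose_mul,
        Matrix.transpose_transpose, Matrix.transpose_transpose]
      simp only [Matrix.mul_assoc, neg_add, Matrix.transpose_neg, neg_zero,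
        Matrix.transpose_transpose]
      congr 1 <;> abel
  refine ⟨heq, fun hΛ hD => ?_⟩
  rw [heq, neg_neg]
  exact posDef_fromBlocks_diag (posDef_conj_aux hΛ (by simpa using hA)) hD
end

section
/- Let m > k ≥ 1 be integers and ε > 0, c > 0, ρ ≥ 0, u ≥ 0, l ≥ 1 real numbers. Let Λ = [[Λ₁₁, Λ₁₂], [Λ₁₂ᵀ, Λ₂₂]] be a real symmetric m×m matrix with Λ₁₁ of size k×k such that Λ - εI is positive definite. Let g = (g₁, g₂) ∈ ℝᵏ × ℝ^{m-k} satisfy Λ₁₁ g₁ + Λ₁₂ g₂ = 0 and ‖g‖ ≥ c·u^ρ, and suppose the operator norm of L = [[-Λ₁₁⁻¹Λ₁₂], [I_{m-k}]] is at most l. Then -g₂ᵀ (Λ₂₂ - Λ₁₂ᵀ Λ₁₁⁻¹ Λ₁₂) g₂ ≤ -ε‖g₂‖² ≤ -(ε c²/l²) u^{2ρ}. -/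
open Matrix

/-- The Euclidean norm of a real vector. -/
noncomputable def euclNorm {ι : Type*} [Fintype ι] (x : ι → ℝ) : ℝ :=
  Real.sqrt (x ⬝ᵥ x)

/-- The operator norm of a real matrix induced by the Euclidean norms. -/
noncomputable def matOpNorm {ι κ : Type*} [Fintype ι] [Fintype κ] [DecidableEq κ]
    (L : Matrix ι κ ℝ) : ℝ :=
  ‖LinearMap.toContinuousLinearMap (Matrix.toEuclideanLin L)‖


lemma dotSelf_nonneg {ι : Type*} [Fintype ι] (x : ι → ℝ) : 0 ≤ x ⬝ᵥ x :=
  Finset.sum_nonneg fun i _ => mul_self_nonneg (x i)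

lemma euclNorm_sq {ι : Type*} [Fintype ι] (x : ι → ℝ) : euclNorm x ^ 2 = x ⬝ᵥ x :=
  Real.sq_sqrt (dotSelf_nonneg x)

lemma euclNorm_nonneg' {ι : Type*} [Fintype ι] (x : ι → ℝ) : 0 ≤ euclNorm x :=
  Real.sqrt_nonneg _

lemma euclNorm_eq {ι : Type*} [Fintype ι] (x : ι → ℝ) :
    euclNorm x = ‖((WithLp.equiv 2 (ι → ℝ)).symm x : EuclideanSpace ℝ ι)‖ := by
  rw [EuclideanSpace.norm_eq, euclNorm, dotProduct]
  congr 1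
  apply Finset.sum_congr rfl
  intro i _
  simp [WithLp.equiv_symm_apply, PiLp.toLp_apply, Real.norm_eq_abs, sq_abs, sq]

lemma mulVec_norm_le {ι κ : Type*} [Fintype ι] [Fintype κ] [DecidableEq κ]
    (L : Matrix ι κ ℝ) (x : κ → ℝ) :
    euclNorm (L *ᵥ x) ≤ matOpNorm L * euclNorm x := by
  rw [euclNorm_eq, euclNorm_eq x, matOpNorm]
  have := (LinearMap.toContinuousLinearMap (Matrix.toEuclideanLin L)).le_opNorm
    ((WithLp.equiv 2 (κ → ℝ)).symm x)
  simpa [WithLp.equiv_symm_apply, Matrix.toEuclideanLin_apply_piLp_toLp] using this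

/-- Under the sub-sliding-mode hypotheses, the Schur complement decay
estimate -g₂ᵀ(Λ/Λ₁₁)g₂ ≤ -ε‖g₂‖² ≤ -(εc²/l²)u^{2ρ} holds. -/
theorem stmt_5 (m k : ℕ) (hk : 1 ≤ k) (hkm : k < m) (ε c ρ u l : ℝ)
    (hε : 0 < ε) (hc : 0 < c) (hρ : 0 ≤ ρ) (hu : 0 ≤ u) (hl : 1 ≤ l)
    (Λ₁₁ : Matrix (Fin k) (Fin k) ℝ) (Λ₁₂ : Matrix (Fin k) (Fin (m - k)) ℝ)
    (Λ₂₂ : Matrix (Fin (m - k)) (Fin (m - k)) ℝ)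
    (h11 : Λ₁₁.IsHermitian) (h22 : Λ₂₂.IsHermitian)
    (hΛ : (Matrix.fromBlocks Λ₁₁ Λ₁₂ Λ₁₂ᵀ Λ₂₂ - ε • 1).PosDef)
    (g₁ : Fin k → ℝ) (g₂ : Fin (m - k) → ℝ)
    (hg : Λ₁₁ *ᵥ g₁ + Λ₁₂ *ᵥ g₂ = 0)
    (hgnorm : c * u ^ ρ ≤ euclNorm (Sum.elim g₁ g₂))
    (hL : matOpNorm (Matrix.fromRows (-(Λ₁₁⁻¹ * Λ₁₂))
      (1 : Matrix (Fin (m - k)) (Fin (m - k)) ℝ)) ≤ l) :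
    -(g₂ ⬝ᵥ ((Λ₂₂ - Λ₁₂ᵀ * Λ₁₁⁻¹ * Λ₁₂) *ᵥ g₂)) ≤ -(ε * euclNorm g₂ ^ 2) ∧
    -(ε * euclNorm g₂ ^ 2) ≤ -(ε * c ^ 2 / l ^ 2 * u ^ (2 * ρ)) := by
  set g : Fin k ⊕ Fin (m - k) → ℝ := Sum.elim g₁ g₂ with hgdef
  have hl0 : (0:ℝ) < l := lt_of_lt_of_le one_pos hl
  -- Λ₁₁ is positive definite, hence invertible
  have h11pd : Λ₁₁.PosDef := by
    refine Matrix.PosDef.of_dotProduct_mulVec_pos h11 (fun x hx => ?_)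
    have hx' : Sum.elim x (0 : Fin (m-k) → ℝ) ≠ 0 := by
      intro h
      apply hx
      ext i
      exact congrFun h (Sum.inl i)
    have := hΛ.dotProduct_mulVec_pos hx'
    have hd0 : 0 ≤ x ⬝ᵥ x := dotSelf_nonneg x
    simp only [star_trivial, Matrix.sub_mulVec, Matrix.fromBlocks_mulVec,
      Sum.elim_comp_inl, Sum.elim_comp_inr,
      Matrix.mulVec_zero, add_zero, Matrix.smul_mulVec, Matrix.one_mulVec,
      dotProduct_sub, sumElim_dotProduct_sumElim,
      dotProduct_smul, dotProduct_zero, zero_dotProduct,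
      smul_eq_mul] at this
    simp only [star_trivial]
    nlinarith [mul_nonneg hε.le hd0]
  have hunit : IsUnit Λ₁₁.det := isUnit_iff_ne_zero.mpr h11pd.det_pos.ne'
  have hInvMul : Λ₁₁⁻¹ * Λ₁₁ = 1 := Matrix.nonsing_inv_mul _ hunit
  -- g₁ in terms of g₂
  have hg1 : g₁ = -((Λ₁₁⁻¹ * Λ₁₂) *ᵥ g₂) := by
    have h1 : Λ₁₁ *ᵥ g₁ = -(Λ₁₂ *ᵥ g₂) := by
      rw [← eq_neg_iff_add_eq_zero] at hg; exact hg
    calc g₁ = (Λ₁₁⁻¹ * Λ₁₁) *ᵥ g₁ := by rw [hInvMul, Matrix.one_mulVec]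
    _ = Λ₁₁⁻¹ *ᵥ (Λ₁₁ *ᵥ g₁) := by rw [Matrix.mulVec_mulVec]
    _ = -((Λ₁₁⁻¹ * Λ₁₂) *ᵥ g₂) := by
        rw [h1, Matrix.mulVec_neg, ← Matrix.mulVec_mulVec]
  -- key identity: gᵀ Λ g = g₂ᵀ (Λ₂₂ - Λ₁₂ᵀΛ₁₁⁻¹Λ₁₂) g₂
  have hkey : g ⬝ᵥ (Matrix.fromBlocks Λ₁₁ Λ₁₂ Λ₁₂ᵀ Λ₂₂ *ᵥ g)
      = g₂ ⬝ᵥ ((Λ₂₂ - Λ₁₂ᵀ * Λ₁₁⁻¹ * Λ₁₂) *ᵥ g₂) := by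
    rw [hgdef]
    rw [Matrix.fromBlocks_mulVec]
    simp only [Sum.elim_comp_inl, Sum.elim_comp_inr]
    rw [sumElim_dotProduct_sumElim]
    rw [hg, dotProduct_zero, zero_add]
    rw [dotProduct_add, Matrix.sub_mulVec, dotProduct_sub]
    have h2 : g₂ ⬝ᵥ (Λ₁₂ᵀ *ᵥ g₁) = (Λ₁₂ *ᵥ g₂) ⬝ᵥ g₁ := by
      rw [Matrix.dotProduct_mulVec, Matrix.vecMul_transpose]
    rw [h2, hg1]
    have h3 : g₂ ⬝ᵥ ((Λ₁₂ᵀ * Λ₁₁⁻¹ * Λ₁₂) *ᵥ g₂)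
        = (Λ₁₂ *ᵥ g₂) ⬝ᵥ ((Λ₁₁⁻¹ * Λ₁₂) *ᵥ g₂) := by
      rw [Matrix.mul_assoc, ← Matrix.mulVec_mulVec, Matrix.dotProduct_mulVec,
        Matrix.vecMul_transpose]
    rw [h3]
    simp [dotProduct_neg]
    ring
  -- positivity of the quadratic form difference
  have hpos : ε * (g ⬝ᵥ g) ≤ g ⬝ᵥ (Matrix.fromBlocks Λ₁₁ Λ₁₂ Λ₁₂ᵀ Λ₂₂ *ᵥ g) := by
    have := hΛ.posSemidef.dotProduct_mulVec_nonneg g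
    simp only [star_trivial, Matrix.sub_mulVec, dotProduct_sub,
      Matrix.smul_mulVec, Matrix.one_mulVec, dotProduct_smul,
      smul_eq_mul] at this
    linarith
  -- norms
  have hgg : g ⬝ᵥ g = g₁ ⬝ᵥ g₁ + g₂ ⬝ᵥ g₂ := by
    rw [hgdef, sumElim_dotProduct_sumElim]
  have hg2sq : euclNorm g₂ ^ 2 = g₂ ⬝ᵥ g₂ := euclNorm_sq g₂
  have hfirst : -(g₂ ⬝ᵥ ((Λ₂₂ - Λ₁₂ᵀ * Λ₁₁⁻¹ * Λ₁₂) *ᵥ g₂)) ≤ -(ε * euclNorm g₂ ^ 2) := by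
    rw [← hkey, hg2sq, neg_le_neg_iff]
    have := dotSelf_nonneg g₁
    nlinarith
  refine ⟨hfirst, ?_⟩
  -- second inequality via operator norm
  have hLg : Matrix.fromRows (-(Λ₁₁⁻¹ * Λ₁₂))
      (1 : Matrix (Fin (m - k)) (Fin (m - k)) ℝ) *ᵥ g₂ = g := by
    rw [Matrix.fromRows_mulVec, Matrix.neg_mulVec, ← hg1, Matrix.one_mulVec, hgdef]
  have hnorm : euclNorm g ≤ l * euclNorm g₂ := by
    have h := mulVec_norm_le (Matrix.fromRows (-(Λ₁₁⁻¹ * Λ₁₂))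
      (1 : Matrix (Fin (m - k)) (Fin (m - k)) ℝ)) g₂
    rw [hLg] at h
    exact h.trans (mul_le_mul_of_nonneg_right hL (euclNorm_nonneg' g₂))
  have hcu : c * u ^ ρ ≤ l * euclNorm g₂ := le_trans hgnorm hnorm
  have hcu0 : 0 ≤ c * u ^ ρ := mul_nonneg hc.le (Real.rpow_nonneg hu ρ)
  have hu2 : u ^ (2 * ρ) = (u ^ ρ) ^ 2 := by
    rw [mul_comm, Real.rpow_mul hu, Real.rpow_two]
  rw [neg_le_neg_iff, hu2]
  rw [div_mul_eq_mul_div, div_le_iff₀ (by positivity)]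
  have hsq : (c * u ^ ρ) ^ 2 ≤ (l * euclNorm g₂) ^ 2 := by
    apply sq_le_sq' (by linarith) hcu
  nlinarith [euclNorm_nonneg' g₂, sq_nonneg (u ^ ρ)]
end

section
/- Let t₀ ∈ ℝ, k > 0 and 0 ≤ ρ < 1/2. Let U : ℝ → ℝ be differentiable on [t₀, ∞) with U(t) ≥ 0 for all t ≥ t₀, and suppose U'(t) ≤ -k·U(t)^{2ρ} for all t ≥ t₀. Set t* = t₀ + U(t₀)^{1-2ρ} / ((1-2ρ)k). Then: (i) for all t with t₀ ≤ t ≤ t*, U(t)^{1-2ρ} ≤ U(t₀)^{1-2ρ} - (1-2ρ)k(t - t₀); and (ii) U(t) = 0 for all t ≥ t*. -/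
/-- Finite-time convergence from the differential inequality
U' ≤ -k·U^{2ρ} with 0 ≤ ρ < 1/2: on [t₀, t*] one has
U(t)^{1-2ρ} ≤ U(t₀)^{1-2ρ} - (1-2ρ)k(t-t₀), and U ≡ 0 on [t*, ∞),
where t* = t₀ + U(t₀)^{1-2ρ}/((1-2ρ)k). -/
theorem stmt_6 (t₀ k ρ : ℝ) (hk : 0 < k) (hρ0 : 0 ≤ ρ) (hρ : ρ < 1 / 2)
    (U U' : ℝ → ℝ)
    (hderiv : ∀ t, t₀ ≤ t → HasDerivWithinAt U (U' t) (Set.Ici t₀) t)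
    (hpos : ∀ t, t₀ ≤ t → 0 ≤ U t)
    (hineq : ∀ t, t₀ ≤ t → U' t ≤ -k * U t ^ (2 * ρ)) :
    let tstar := t₀ + U t₀ ^ (1 - 2 * ρ) / ((1 - 2 * ρ) * k)
    (∀ t, t₀ ≤ t → t ≤ tstar →
      U t ^ (1 - 2 * ρ) ≤ U t₀ ^ (1 - 2 * ρ) - (1 - 2 * ρ) * k * (t - t₀)) ∧
    (∀ t, tstar ≤ t → U t = 0) := by
  intro tstar
  set p : ℝ := 1 - 2 * ρ with hpdef
  have hp : 0 < p := by simp only [hpdef]; linarith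
  have hpk : 0 < p * k := mul_pos hp hk
  have hUcont : ContinuousOn U (Set.Ici t₀) := fun t ht =>
    (hderiv t ht).continuousWithinAt
  -- U is antitone on [t₀, ∞)
  have anti : AntitoneOn U (Set.Ici t₀) := by
    apply antitoneOn_of_hasDerivWithinAt_nonpos (convex_Ici t₀) hUcont
      (f' := U')
    · intro x hx
      rw [interior_Ici] at hx
      exact ((hderiv x hx.le).hasDerivAt (Ici_mem_nhds hx)).hasDerivWithinAt
    · intro x hx
      rw [interior_Ici] at hx
      have := hineq x hx.le
      have h2 : 0 ≤ U x ^ (2 * ρ) := Real.rpow_nonneg (hpos x hx.le) _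
      nlinarith
  -- key inequality
  have key : ∀ t, t₀ ≤ t → t ≤ tstar →
      U t ^ p ≤ U t₀ ^ p - p * k * (t - t₀) := by
    intro t ht htstar
    by_cases hUt : U t = 0
    · rw [hUt, Real.zero_rpow hp.ne']
      have h1 : t - t₀ ≤ U t₀ ^ p / (p * k) := by
        have : t ≤ t₀ + U t₀ ^ p / (p * k) := htstar
        linarith
      have := (le_div_iff₀ hpk).mp h1
      nlinarith
    · have hUtpos : 0 < U t := (hpos t ht).lt_of_ne' hUt
      -- U > 0 on [t₀, t]
      have hUpos : ∀ x ∈ Set.Icc t₀ t, 0 < U x := fun x hx =>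
        lt_of_lt_of_le hUtpos (anti hx.1 (le_trans hx.1 hx.2) hx.2)
      set g : ℝ → ℝ := fun s => U s ^ p + p * k * (s - t₀) with hg
      have ganti : AntitoneOn g (Set.Icc t₀ t) := by
        apply antitoneOn_of_hasDerivWithinAt_nonpos (convex_Icc t₀ t)
          (f' := fun x => U' x * p * U x ^ (p - 1) + p * k)
        · apply ContinuousOn.add
          · exact ((hUcont.mono (Set.Icc_subset_Ici_self)).rpow_const
              (fun x _ => Or.inr hp.le))
          · exact (continuousOn_const.mul ((continuousOn_id).sub continuousOn_const))
        · intro x hx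
          rw [interior_Icc] at hx
          have hx' : x ∈ Set.Icc t₀ t := ⟨hx.1.le, hx.2.le⟩
          have hUx : 0 < U x := hUpos x hx'
          have hd : HasDerivAt U (U' x) x :=
            (hderiv x hx.1.le).hasDerivAt (Ici_mem_nhds hx.1)
          have hd2 : HasDerivAt (fun s => U s ^ p) (U' x * p * U x ^ (p - 1)) x :=
            hd.rpow_const (Or.inl hUx.ne')
          have hd3 : HasDerivAt (fun s => p * k * (s - t₀)) (p * k) x := by
            simpa using ((hasDerivAt_id x).sub_const t₀).const_mul (p * k)
          exact (hd2.add hd3).hasDerivWithinAt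
        · intro x hx
          rw [interior_Icc] at hx
          have hx' : x ∈ Set.Icc t₀ t := ⟨hx.1.le, hx.2.le⟩
          have hUx : 0 < U x := hUpos x hx'
          have h1 : U' x ≤ -k * U x ^ (2 * ρ) := hineq x hx.1.le
          have h2 : 0 < p * U x ^ (p - 1) :=
            mul_pos hp (Real.rpow_pos_of_pos hUx _)
          have h3 : U' x * (p * U x ^ (p - 1)) ≤
              -k * U x ^ (2 * ρ) * (p * U x ^ (p - 1)) :=
            mul_le_mul_of_nonneg_right h1 h2.le
          have h4 : U x ^ (2 * ρ) * U x ^ (p - 1) = 1 := by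
            rw [← Real.rpow_add hUx]
            have : 2 * ρ + (p - 1) = 0 := by simp [hpdef]
            rw [this, Real.rpow_zero]
          nlinarith
      have := ganti (Set.left_mem_Icc.mpr ht) (Set.right_mem_Icc.mpr ht) ht
      simp only [hg] at this
      linarith
  refine ⟨key, ?_⟩
  -- part (ii)
  have htstar0 : t₀ ≤ tstar := by
    have : 0 ≤ U t₀ ^ p / (p * k) :=
      div_nonneg (Real.rpow_nonneg (hpos t₀ le_rfl) _) hpk.le
    simp only [tstar]; linarith
  have hUstar : U tstar = 0 := by
    have h1 := key tstar htstar0 le_rfl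
    have h2 : p * k * (tstar - t₀) = U t₀ ^ p := by
      have : tstar - t₀ = U t₀ ^ p / (p * k) := by simp [tstar, hpdef]
      rw [this, mul_div_cancel₀ _ hpk.ne']
    rw [h2] at h1
    have h3 : U tstar ^ p ≤ 0 := by linarith
    have h4 : U tstar ^ p = 0 :=
      le_antisymm h3 (Real.rpow_nonneg (hpos tstar htstar0) _)
    rcases (Real.rpow_eq_zero (hpos tstar htstar0) hp.ne').mp h4 with h
    exact h
  intro t ht
  have ht0 : t₀ ≤ t := le_trans htstar0 ht
  exact le_antisymm (hUstar ▸ anti htstar0 ht0 ht) (hpos t ht0)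
end

section
/- Let m be a positive integer. Let U : ℝᵐ → ℝ be continuously differentiable and φ : ℝᵐ × ℝᵐ → ℝᵐ be continuously differentiable. Fix (q, η) ∈ ℝᵐ × ℝᵐ, let A = ∂φ/∂q(q,η) and B = ∂φ/∂η(q,η) be the partial Jacobian matrices, assume A is invertible, and let T, D, D_d be real m×m matrices and G an invertible real m×m matrix. Write g = ∇U(φ(q,η)) and define H_d(q,η) = (1/2)‖η‖² + U(φ(q,η)) and the feedback u = -G⁻¹{(D_d - D)η + (Tᵀ Aᵀ + D_d Bᵀ) g}. Then: (i) the gradient of H_d with respect to q at (q,η) equals Aᵀ g and the gradient with respect to η equals η + Bᵀ g; (ii) T η = -T Bᵀ A⁻ᵀ (Aᵀ g) + T(η + Bᵀ g); and (iii) -D η + G u = -Tᵀ(Aᵀ g) - D_d(η + Bᵀ g). Hence the open-loop dynamics q̇ = Tη, η̇ = -Dη + Gu coincide with the closed-loop port-Hamiltonian dynamics q̇ = -T Bᵀ A⁻ᵀ ∇_q H_d + T ∇_η H_d, η̇ = -Tᵀ ∇_q H_d - D_d ∇_η H_d. -/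
open Matrix


lemma my_half_norm_sq {F : Type*} [NormedAddCommGroup F] [InnerProductSpace ℝ F]
    [CompleteSpace F] (x : F) :
    HasGradientAt (fun y => (1 / 2 : ℝ) * ‖y‖ ^ 2) x x := by
  rw [hasGradientAt_iff_hasFDerivAt]
  have h := ((hasFDerivAt_id x).inner ℝ (hasFDerivAt_id x)).const_smul (1 / 2 : ℝ)
  convert h using 1
  · rfl
  · rfl
  · funext y
    simp [real_inner_self_eq_norm_sq, smul_eq_mul]
  · ext v
    simp [fderivInnerCLM_apply, InnerProductSpace.toDual_apply_apply, real_inner_comm]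
    ring

lemma my_adjoint {m : ℕ} (A : Matrix (Fin m) (Fin m) ℝ) :
    Matrix.toEuclideanCLM (𝕜 := ℝ) Aᵀ =
      ContinuousLinearMap.adjoint (Matrix.toEuclideanCLM (𝕜 := ℝ) A) := by
  have : Aᵀ = star A := by
    ext i j; simp [Matrix.star_eq_conjTranspose, Matrix.conjTranspose_apply]
  rw [this, map_star]
  rfl

/-- The continuous linear map on Euclidean space induced by a square real matrix. -/
noncomputable def mCLM {m : ℕ} (A : Matrix (Fin m) (Fin m) ℝ) :
    EuclideanSpace ℝ (Fin m) →L[ℝ] EuclideanSpace ℝ (Fin m) :=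
  Matrix.toEuclideanCLM (𝕜 := ℝ) A


lemma mCLM_mul {m : ℕ} (X Y : Matrix (Fin m) (Fin m) ℝ) (v : EuclideanSpace ℝ (Fin m)) :
    mCLM (X * Y) v = mCLM X (mCLM Y v) := by
  show Matrix.toEuclideanCLM (𝕜 := ℝ) (X * Y) v = _
  rw [_root_.map_mul]; rfl

lemma mCLM_add {m : ℕ} (X Y : Matrix (Fin m) (Fin m) ℝ) (v : EuclideanSpace ℝ (Fin m)) :
    mCLM (X + Y) v = mCLM X v + mCLM Y v := by
  show Matrix.toEuclideanCLM (𝕜 := ℝ) (X + Y) v = _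
  rw [map_add]; rfl

lemma mCLM_sub {m : ℕ} (X Y : Matrix (Fin m) (Fin m) ℝ) (v : EuclideanSpace ℝ (Fin m)) :
    mCLM (X - Y) v = mCLM X v - mCLM Y v := by
  show Matrix.toEuclideanCLM (𝕜 := ℝ) (X - Y) v = _
  rw [map_sub]; rfl

lemma mCLM_one {m : ℕ} (v : EuclideanSpace ℝ (Fin m)) : mCLM (1 : Matrix (Fin m) (Fin m) ℝ) v = v := by
  show Matrix.toEuclideanCLM (𝕜 := ℝ) (1 : Matrix (Fin m) (Fin m) ℝ) v = _
  rw [_root_.map_one]; rfl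

/-- (Lemma 1 of the paper, generalized kinetic-potential energy
shaping.) With A = ∂φ/∂q, B = ∂φ/∂η invertible Jacobians, g = ∇U(φ(q,η)),
H_d = (1/2)‖η‖² + U(φ(q,η)) and feedback u = -G⁻¹{(D_d - D)η + (TᵀAᵀ + D_d Bᵀ)g}:
(i) ∇_q H_d = Aᵀg and ∇_η H_d = η + Bᵀg; (ii) Tη = -TBᵀA⁻ᵀ∇_qH_d + T∇_ηH_d;
(iii) -Dη + Gu = -Tᵀ∇_qH_d - D_d∇_ηH_d. -/
theorem stmt_10 (m : ℕ) (hm : 0 < m)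
    (U : EuclideanSpace ℝ (Fin m) → ℝ) (hUsmooth : ContDiff ℝ 1 U)
    (φ : EuclideanSpace ℝ (Fin m) × EuclideanSpace ℝ (Fin m) → EuclideanSpace ℝ (Fin m))
    (hφsmooth : ContDiff ℝ 1 φ)
    (q η : EuclideanSpace ℝ (Fin m))
    (A B T D Dd G : Matrix (Fin m) (Fin m) ℝ)
    (hA : IsUnit A.det) (hG : IsUnit G.det)
    (g : EuclideanSpace ℝ (Fin m))
    (hg : HasGradientAt U g (φ (q, η)))
    (hAder : HasFDerivAt (fun q' => φ (q', η)) (mCLM A) q)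
    (hBder : HasFDerivAt (fun η' => φ (q, η')) (mCLM B) η) :
    let Hd : EuclideanSpace ℝ (Fin m) × EuclideanSpace ℝ (Fin m) → ℝ :=
      fun p => (1 / 2) * ‖p.2‖ ^ 2 + U (φ p)
    let u : EuclideanSpace ℝ (Fin m) :=
      -(mCLM G⁻¹ (mCLM (Dd - D) η + mCLM (Tᵀ * Aᵀ + Dd * Bᵀ) g))
    HasGradientAt (fun q' => Hd (q', η)) (mCLM Aᵀ g) q ∧
    HasGradientAt (fun η' => Hd (q, η')) (η + mCLM Bᵀ g) η ∧
    mCLM T η = -(mCLM (T * Bᵀ * (A⁻¹)ᵀ) (mCLM Aᵀ g)) + mCLM T (η + mCLM Bᵀ g) ∧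
    -(mCLM D η) + mCLM G u =
      -(mCLM Tᵀ (mCLM Aᵀ g)) - mCLM Dd (η + mCLM Bᵀ g) := by
  intro Hd u
  have hgF : HasFDerivAt U (InnerProductSpace.toDual ℝ _ g) (φ (q, η)) :=
    hasGradientAt_iff_hasFDerivAt.mp hg
  -- the key adjoint inner-product identity
  have hadj : ∀ (M : Matrix (Fin m) (Fin m) ℝ) (v w : EuclideanSpace ℝ (Fin m)),
      inner ℝ (mCLM Mᵀ v) w = (inner ℝ v (mCLM M w) : ℝ) := by
    intro M v w
    rw [mCLM, my_adjoint, ContinuousLinearMap.adjoint_inner_left]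
    rfl
  refine ⟨?_, ?_, ?_, ?_⟩
  · -- gradient in q
    rw [hasGradientAt_iff_hasFDerivAt]
    have h := (hgF.comp q hAder).const_add ((1 / 2 : ℝ) * ‖η‖ ^ 2)
    convert h using 1
    · rfl
    · rfl
    · rfl
    ext v
    simp only [ContinuousLinearMap.coe_comp', Function.comp_apply,
      InnerProductSpace.toDual_apply_apply]
    exact hadj A g v
  · -- gradient in η
    rw [hasGradientAt_iff_hasFDerivAt]
    have h1 := (my_half_norm_sq η).hasFDerivAt
    have h2 := hgF.comp η hBder
    have h := h1.add h2
    convert h using 1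
    · rfl
    · rfl
    · rfl
    ext v
    simp only [ContinuousLinearMap.coe_comp', Function.comp_apply,
      ContinuousLinearMap.add_apply, InnerProductSpace.toDual_apply_apply, inner_add_left]
    rw [hadj B g v]
  · -- (ii)
    have key : mCLM (T * Bᵀ * (A⁻¹)ᵀ) (mCLM Aᵀ g) = mCLM T (mCLM Bᵀ g) := by
      have hmat : T * Bᵀ * (A⁻¹)ᵀ * Aᵀ = T * Bᵀ := by
        rw [Matrix.mul_assoc (T * Bᵀ), ← Matrix.transpose_mul,
          Matrix.mul_nonsing_inv A hA, Matrix.transpose_one, Matrix.mul_one]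
      calc mCLM (T * Bᵀ * (A⁻¹)ᵀ) (mCLM Aᵀ g)
          = mCLM (T * Bᵀ * (A⁻¹)ᵀ * Aᵀ) g := (mCLM_mul _ _ _).symm
        _ = mCLM T (mCLM Bᵀ g) := by rw [hmat]; exact mCLM_mul _ _ _
    rw [key, map_add]
    abel
  · -- (iii)
    have hGu : mCLM G u = -(mCLM (Dd - D) η + mCLM (Tᵀ * Aᵀ + Dd * Bᵀ) g) := by
      show mCLM G (-(mCLM G⁻¹ _)) = _
      rw [map_neg, neg_inj]
      have : ∀ v, mCLM G (mCLM G⁻¹ v) = v := by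
        intro v
        rw [← mCLM_mul, Matrix.mul_nonsing_inv G hG, mCLM_one]
      exact this _
    rw [hGu]
    have e1 : mCLM (Dd - D) η = mCLM Dd η - mCLM D η := mCLM_sub Dd D η
    have e2 : mCLM (Tᵀ * Aᵀ + Dd * Bᵀ) g = mCLM Tᵀ (mCLM Aᵀ g) + mCLM Dd (mCLM Bᵀ g) := by
      rw [mCLM_add, mCLM_mul, mCLM_mul]
    rw [e1, e2, map_add]
    abel
end

section
/- Let m be a positive integer. Let T : ℝᵐ → ℝ^{m×m} take invertible matrix values, D : ℝᵐ × ℝᵐ → ℝ^{m×m}, and G : ℝᵐ → ℝ^{m×m} take invertible values. Let q^d : ℝ → ℝᵐ be twice differentiable, and suppose the map η^d(q, t) = T(q)⁻¹ · (dq^d/dt)(t) is differentiable in (q,t). Let q, η : ℝ → ℝᵐ be differentiable curves, v : ℝ → ℝᵐ, and suppose for all t: q̇(t) = T(q(t)) η(t) and η̇(t) = -D(q(t), η(t)) η(t) + G(q(t)) u(t), where u(t) = G(q(t))⁻¹ ( D(q(t),η(t)) η^d(q(t),t) + (∂η^d/∂q)(q(t),t) · T(q(t)) η(t) + T(q(t))⁻¹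 q̈^d(t) + v(t) ). Define the error curves q̃(t) = q(t) - q^d(t) and η̃(t) = η(t) - η^d(q(t), t). Then for all t: d q̃/dt = T(q(t)) η̃(t) and d η̃/dt = -D(q(t), η(t)) η̃(t) + v(t). -/
open Matrix

/-- (Lemma 2 of the paper.) With target momentum
η^d(q,t) = T(q)⁻¹ q̇^d(t) and the stated tracking feedback u, the error coordinates
q̃ = q - q^d, η̃ = η - η^d(q,t) satisfy dq̃/dt = T(q)η̃ and dη̃/dt = -D(q,η)η̃ + v.
Here `ηdDer p` is the (joint) Fréchet derivative of (q,t) ↦ η^d(q,t) at p, so that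
the partial Jacobian ∂η^d/∂q applied to w is `ηdDer p (w, 0)`. -/
theorem stmt_12 (m : ℕ) (hm : 0 < m)
    (T : (Fin m → ℝ) → Matrix (Fin m) (Fin m) ℝ) (hT : ∀ q, IsUnit (T q).det)
    (D : (Fin m → ℝ) → (Fin m → ℝ) → Matrix (Fin m) (Fin m) ℝ)
    (G : (Fin m → ℝ) → Matrix (Fin m) (Fin m) ℝ) (hG : ∀ q, IsUnit (G q).det)
    (qd qd' qd'' : ℝ → Fin m → ℝ)
    (hqd : ∀ t, HasDerivAt qd (qd' t) t)
    (hqd' : ∀ t, HasDerivAt qd' (qd'' t) t)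
    (ηdDer : (Fin m → ℝ) × ℝ → ((Fin m → ℝ) × ℝ →L[ℝ] (Fin m → ℝ)))
    (hηd : ∀ p : (Fin m → ℝ) × ℝ,
      HasFDerivAt (fun pp : (Fin m → ℝ) × ℝ => (T pp.1)⁻¹ *ᵥ qd' pp.2) (ηdDer p) p)
    (q η u v : ℝ → Fin m → ℝ)
    (hu : ∀ t, u t = (G (q t))⁻¹ *ᵥ
      (D (q t) (η t) *ᵥ ((T (q t))⁻¹ *ᵥ qd' t) +
        ηdDer (q t, t) (T (q t) *ᵥ η t, 0) + (T (q t))⁻¹ *ᵥ qd'' t + v t))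
    (hq : ∀ t, HasDerivAt q (T (q t) *ᵥ η t) t)
    (hη : ∀ t, HasDerivAt η (-(D (q t) (η t) *ᵥ η t) + G (q t) *ᵥ u t) t) :
    ∀ t : ℝ,
      HasDerivAt (fun s => q s - qd s)
        (T (q t) *ᵥ (η t - (T (q t))⁻¹ *ᵥ qd' t)) t ∧
      HasDerivAt (fun s => η s - (T (q s))⁻¹ *ᵥ qd' s)
        (-(D (q t) (η t) *ᵥ (η t - (T (q t))⁻¹ *ᵥ qd' t)) + v t) t := by
  intro t
  have hTinv : T (q t) *ᵥ ((T (q t))⁻¹ *ᵥ qd' t) = qd' t := by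
    rw [Matrix.mulVec_mulVec, Matrix.mul_nonsing_inv _ (hT (q t)), Matrix.one_mulVec]
  constructor
  · have h1 := (hq t).sub (hqd t)
    have : T (q t) *ᵥ (η t - (T (q t))⁻¹ *ᵥ qd' t) = T (q t) *ᵥ η t - qd' t := by
      rw [Matrix.mulVec_sub, hTinv]
    rw [this]
    exact h1
  · -- derivative of ηd along s ↦ (q s, s)
    have hcurve : HasDerivAt (fun s : ℝ => (q s, s)) (T (q t) *ᵥ η t, (1 : ℝ)) t :=
      HasDerivAt.prodMk (hq t) (hasDerivAt_id t)
    have hηdq : HasDerivAt (fun s => (T (q s))⁻¹ *ᵥ qd' s)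
        (ηdDer (q t, t) (T (q t) *ᵥ η t, 1)) t :=
      HasFDerivAt.comp_hasDerivAt (f := fun s => (q s, s)) t (hηd (q t, t)) hcurve
    -- partial time derivative equals T⁻¹ qd''
    have hpart : ηdDer (q t, t) (0, 1) = (T (q t))⁻¹ *ᵥ qd'' t := by
      have hc2 : HasDerivAt (fun s : ℝ => ((q t : Fin m → ℝ), s)) ((0 : Fin m → ℝ), (1 : ℝ)) t :=
        HasDerivAt.prodMk (hasDerivAt_const t (q t)) (hasDerivAt_id t)
      have h1 : HasDerivAt (fun s : ℝ => (T (q t))⁻¹ *ᵥ qd' s)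
          (ηdDer (q t, t) (0, 1)) t :=
        HasFDerivAt.comp_hasDerivAt (f := fun s : ℝ => ((q t : Fin m → ℝ), s)) t (hηd (q t, t)) hc2
      have L := ((T (q t))⁻¹).mulVecLin.toContinuousLinearMap
      have h2 : HasDerivAt (fun s : ℝ => (T (q t))⁻¹ *ᵥ qd' s)
          ((T (q t))⁻¹ *ᵥ qd'' t) t := by
        have := (((T (q t))⁻¹).mulVecLin.toContinuousLinearMap).hasFDerivAt.comp_hasDerivAt
          t (hqd' t)
        exact this
      exact h1.unique h2
    have hsplit : ηdDer (q t, t) (T (q t) *ᵥ η t, 1)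
        = ηdDer (q t, t) (T (q t) *ᵥ η t, 0) + (T (q t))⁻¹ *ᵥ qd'' t := by
      rw [← hpart, ← map_add]
      norm_num
    have hGu : G (q t) *ᵥ u t =
        D (q t) (η t) *ᵥ ((T (q t))⁻¹ *ᵥ qd' t) +
          ηdDer (q t, t) (T (q t) *ᵥ η t, 0) + (T (q t))⁻¹ *ᵥ qd'' t + v t := by
      rw [hu t, Matrix.mulVec_mulVec, Matrix.mul_nonsing_inv _ (hG (q t)), Matrix.one_mulVec]
    have hmain := (hη t).sub hηdq
    have : -(D (q t) (η t) *ᵥ η t) + G (q t) *ᵥ u t - ηdDer (q t, t) (T (q t) *ᵥ η t, 1)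
        = -(D (q t) (η t) *ᵥ (η t - (T (q t))⁻¹ *ᵥ qd' t)) + v t := by
      rw [hGu, hsplit, Matrix.mulVec_sub]
      abel
    rwa [this] at hmain
end
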